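/- Let m ≠ 0 and λ ≠ 0 be real constants and set μ = m(λ−1)/2. Consider on ℝ³ with coordinates (τ,x,y) the conformally rescaled metric ĝ = e^{2x}e^{2μτ}·diag(−e^{mτ}, e^{mτ}, 1), i.e. ĝ = diag(−e^{mλτ+2x}, e^{mλτ+2x}, e^{m(λ−1)τ+2x}). Then the vector field Y₇ = (2/m, 0, y) is a homothetic vector of ĝ with constant conformal factor ψ ≡ λ. -/

import Mathlib

open Real

/-- Partial derivative of a scalar function on `ℝⁿ` with respect to the `c`-th coordinate. -/
noncomputable def pd {n : ℕ} (f : (Fin n → ℝ) → ℝ) (c : Fin n) (p : Fin n → ℝ) : ℝ :=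
  fderiv ℝ f p (Pi.single c 1)

/-- `X` is a conformal Killing vector of the metric `g` with conformal factor `ψ`:
for all indices `a b` and all points `p`,
`Σ_c [X^c ∂_c g_{ab} + g_{cb} ∂_a X^c + g_{ac} ∂_b X^c] = 2 ψ g_{ab}`. -/
def IsCKV {n : ℕ} (g : (Fin n → ℝ) → Matrix (Fin n) (Fin n) ℝ)
    (X : (Fin n → ℝ) → (Fin n → ℝ)) (ψ : (Fin n → ℝ) → ℝ) : Prop :=
  ∀ (a b : Fin n) (p : Fin n → ℝ),
    (∑ c, (X p c * pd (fun q => g q a b) c p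
      + g p c b * pd (fun q => X q c) a p
      + g p a c * pd (fun q => X q c) b p)) = 2 * ψ p * g p a b

lemma pd_const {n : ℕ} (r : ℝ) (c : Fin n) (p : Fin n → ℝ) : pd (fun _ => r) c p = 0 := by
  simp [pd]

lemma pd_coord {n : ℕ} (i c : Fin n) (p : Fin n → ℝ) :
    pd (fun q => q i) c p = if c = i then 1 else 0 := by
  have h : HasFDerivAt (fun q : Fin n → ℝ => q i)
      (ContinuousLinearMap.proj i : (Fin n → ℝ) →L[ℝ] ℝ) p :=
    hasFDerivAt_apply _ _
  simp [pd, h.fderiv, Pi.single_apply, eq_comm]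

lemma hasfd_lin (α β : ℝ) (p : Fin 3 → ℝ) :
    HasFDerivAt (fun q : Fin 3 → ℝ => α * q 0 + β * q 1)
      (α • (ContinuousLinearMap.proj 0 : (Fin 3 → ℝ) →L[ℝ] ℝ)
        + β • ContinuousLinearMap.proj 1) p := by
  have h0 : HasFDerivAt (fun q : Fin 3 → ℝ => q 0)
      (ContinuousLinearMap.proj 0 : (Fin 3 → ℝ) →L[ℝ] ℝ) p :=
    hasFDerivAt_apply _ _
  have h1 : HasFDerivAt (fun q : Fin 3 → ℝ => q 1)
      (ContinuousLinearMap.proj 1 : (Fin 3 → ℝ) →L[ℝ] ℝ) p :=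
    hasFDerivAt_apply _ _
  exact (h0.const_mul α).add (h1.const_mul β)

lemma pd_exp_lin (α β : ℝ) (c : Fin 3) (p : Fin 3 → ℝ) :
    pd (fun q => Real.exp (α * q 0 + β * q 1)) c p
      = Real.exp (α * p 0 + β * p 1)
        * (α * (if c = 0 then 1 else 0) + β * (if c = 1 then 1 else 0)) := by
  have h := (hasfd_lin α β p).exp
  rw [pd, h.fderiv]
  simp [Pi.single_apply, eq_comm]
  split_ifs <;> ring

lemma pd_neg_exp_lin (α β : ℝ) (c : Fin 3) (p : Fin 3 → ℝ) :
    pd (fun q => -Real.exp (α * q 0 + β * q 1)) c p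
      = -(Real.exp (α * p 0 + β * p 1)
        * (α * (if c = 0 then 1 else 0) + β * (if c = 1 then 1 else 0))) := by
  rw [pd, fderiv_fun_neg, ← pd_exp_lin α β c p, pd]
  simp

/-- `Y₇ = (2/m, 0, y)` is a homothetic vector of the rescaled metric
`ĝ = diag(−e^{mλτ+2x}, e^{mλτ+2x}, e^{m(λ−1)τ+2x})` with constant conformal factor `λ`. -/
theorem Y7_is_HV_rescaled (m lam : ℝ) (hm : m ≠ 0) (hlam : lam ≠ 0) :
    IsCKV
      (fun p : Fin 3 → ℝ =>
        Matrix.diagonal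
          ![-Real.exp (m * lam * p 0 + 2 * p 1),
            Real.exp (m * lam * p 0 + 2 * p 1),
            Real.exp (m * (lam - 1) * p 0 + 2 * p 1)])
      (fun p : Fin 3 → ℝ => ![2 / m, 0, p 2])
      (fun _ => lam) := by
  intro a b p
  fin_cases a <;> fin_cases b <;>
    simp [Fin.sum_univ_three, Matrix.diagonal, pd_const, pd_coord, pd_exp_lin, pd_neg_exp_lin] <;>
    field_simp <;> ring
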